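/- arXiv:cs/0408015 — 3 statements merged into one kernel-verified Lean document; each statement's English description precedes it below -/
import Mathlib

section
/- For every L-sentence φ, the set {n : ℕ | 𝔅ₙ ⊨ φ} is finite or cofinite (i.e., it is finite or its complement in ℕ is finite). In other words, the truth value of every closed first-order formula about boolean algebras of finite sets is determined by a finite or cofinite set of possible cardinalities of the underlying finite set. -/
open FirstOrder

/-- The relation symbols of the language with a single binary relation `⊑`. -/
inductive SubsetRel : ℕ → Type
  | sub : SubsetRel 2

/-- The first-order language whose only symbol is a single binary relation `⊑`. -/
def LBA : FirstOrder.Language := ⟨fun _ => Empty, SubsetRel⟩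

/-- The structure `𝔅ₙ`: the powerset of `Fin n`, interpreting `⊑` as inclusion `⊆`. -/
def powBA (n : ℕ) : LBA.Structure (Set (Fin n)) where
  funMap := fun f _ => f.elim
  RelMap := fun r v =>
    match r with
    | .sub => v 0 ⊆ v 1

/-!
Ehrenfeucht–Fraïssé argument. A tuple `v` of subsets of a finite set cuts it into atoms, one for
each membership pattern; a formula with `k` nested quantifiers, evaluated at `v`, only sees the
sizes of these atoms capped at `2 ^ k`. Indeed, atomic formulas only see which atoms are empty,
and a new set `x` splits every atom `A` into `A ∩ x` and `A \ x`: if two atom sizes agree up to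
`2 ^ (k + 1)`, the other side can split its atom into two pieces whose sizes agree with those of
`A ∩ x` and `A \ x` up to `2 ^ k`. For a sentence there is one atom, the whole set, so all `𝔅ₙ`
with `n ≥ 2 ^ k` satisfy the same sentences of quantifier depth `k`.
-/

open FirstOrder Language Set

section Atoms

variable {α β : Type*} {l : ℕ}

/-- The nonempty `atom v s` are the atoms of the Boolean algebra generated by the `v i`. -/
def atom (v : Fin l → Set α) (s : Fin l → Prop) : Set α :=
  {z | (fun i => z ∈ v i) = s}

theorem mem_atom_self (v : Fin l → Set α) (z : α) : z ∈ atom v (fun i => z ∈ v i) := rfl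

theorem atom_snoc (v : Fin l → Set α) (x : Set α) (s : Fin (l + 1) → Prop) :
    atom (Fin.snoc v x) s = atom v (Fin.init s) ∩ {z | (z ∈ x) = s (Fin.last l)} := by
  ext z
  have hpattern : (fun i => z ∈ (Fin.snoc v x : Fin (l + 1) → Set α) i) =
      Fin.snoc (fun i => z ∈ v i) (z ∈ x) :=
    Fin.comp_snoc (z ∈ ·) v x
  conv_lhs => rw [← Fin.snoc_init_self s]
  change (fun i => z ∈ (Fin.snoc v x : Fin (l + 1) → Set α) i) = _ ↔ _
  rw [hpattern, Fin.snoc_inj]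
  rfl

theorem atom_of_isEmpty (v : Fin 0 → Set α) (s : Fin 0 → Prop) : atom v s = univ :=
  eq_univ_of_forall fun _ => Subsingleton.elim _ _

theorem subset_iff_forall_atom_eq_empty (v : Fin l → Set α) (i j : Fin l) :
    v i ⊆ v j ↔ ∀ s : Fin l → Prop, s i → ¬ s j → atom v s = ∅ := by
  constructor
  · intro hij s hi hj
    refine eq_empty_of_forall_notMem fun z (hz : _ = s) => ?_
    subst hz
    exact hj (hij hi)
  · intro h z hzi
    by_contra hzj
    exact (h _ hzi hzj).subset (mem_atom_self v z)

end Atoms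

theorem Nat.exists_add_eq_and_min_eq {t a₁ a₂ c : ℕ} (h : min (a₁ + a₂) (2 * t) = min c (2 * t)) :
    ∃ b₁ b₂, b₁ + b₂ = c ∧ min a₁ t = min b₁ t ∧ min a₂ t = min b₂ t := by
  rcases lt_or_ge a₁ t with h₁ | h₁
  · exact ⟨a₁, c - a₁, by omega, by omega, by omega⟩
  rcases lt_or_ge a₂ t with h₂ | h₂
  · exact ⟨c - a₂, a₂, by omega, by omega, by omega⟩
  · exact ⟨t, c - t, by omega, by omega, by omega⟩

theorem Set.exists_subset_min_ncard_eq {α β : Type*} [Finite α] [Finite β] {t : ℕ} {A : Set α}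
    {B : Set β} (h : min A.ncard (2 * t) = min B.ncard (2 * t)) (x : Set α) :
    ∃ T ⊆ B, min (A ∩ x).ncard t = min T.ncard t ∧ min (A \ x).ncard t = min (B \ T).ncard t := by
  rw [← ncard_inter_add_ncard_sdiff_eq_ncard A x] at h
  obtain ⟨b₁, b₂, hsum, h₁, h₂⟩ := Nat.exists_add_eq_and_min_eq h
  obtain ⟨T, hTB, hT⟩ := exists_subset_card_eq (s := B) (n := b₁) (by omega)
  refine ⟨T, hTB, hT ▸ h₁, ?_⟩
  rwa [ncard_sdiff hTB, hT, ← hsum, Nat.add_sub_cancel_left]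

section AtomsAgree

variable {α β : Type*} {l t t' : ℕ} {v : Fin l → Set α} {w : Fin l → Set β}

def AtomsAgree (t : ℕ) (v : Fin l → Set α) (w : Fin l → Set β) : Prop :=
  ∀ s, min (atom v s).ncard t = min (atom w s).ncard t

theorem AtomsAgree.symm (h : AtomsAgree t v w) : AtomsAgree t w v := fun s => (h s).symm

theorem AtomsAgree.mono (h : AtomsAgree t v w) (ht : t' ≤ t) : AtomsAgree t' v w := fun s => by
  have := h s
  omega

theorem AtomsAgree.atom_eq_empty_iff [Finite α] [Finite β] (h : AtomsAgree t v w) (ht : 0 < t)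
    (s : Fin l → Prop) : atom v s = ∅ ↔ atom w s = ∅ := by
  have := h s
  rw [← ncard_eq_zero, ← ncard_eq_zero]
  omega

theorem AtomsAgree.subset_iff [Finite α] [Finite β] (h : AtomsAgree t v w) (ht : 0 < t)
    (i j : Fin l) : v i ⊆ v j ↔ w i ⊆ w j := by
  simp only [subset_iff_forall_atom_eq_empty, h.atom_eq_empty_iff ht]

theorem AtomsAgree.eq_iff [Finite α] [Finite β] (h : AtomsAgree t v w) (ht : 0 < t)
    (i j : Fin l) : v i = v j ↔ w i = w j := by
  rw [subset_antisymm_iff, subset_antisymm_iff, h.subset_iff ht, h.subset_iff ht]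

theorem atomsAgree_fin_zero (v : Fin 0 → Set α) (w : Fin 0 → Set β) (hα : t ≤ Nat.card α)
    (hβ : t ≤ Nat.card β) : AtomsAgree t v w := fun s => by
  rw [atom_of_isEmpty, atom_of_isEmpty, ncard_univ, ncard_univ]
  omega

/-- `y` is assembled atom by atom, cutting each atom of `w` as `exists_subset_min_ncard_eq`
prescribes for the matching atom of `v`. -/
theorem AtomsAgree.exists_snoc [Finite α] [Finite β] (h : AtomsAgree (2 * t) v w) (x : Set α) :
    ∃ y : Set β, AtomsAgree t (Fin.snoc v x) (Fin.snoc w y) := by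
  choose T hTw hT using fun s => exists_subset_min_ncard_eq (h s) x
  set y : Set β := {z | z ∈ T (fun i => z ∈ w i)}
  refine ⟨y, fun s => ?_⟩
  rw [atom_snoc, atom_snoc]
  set s₀ := Fin.init s
  have hsplit : ∀ z ∈ atom w s₀, z ∈ y ↔ z ∈ T s₀ := by
    rintro z (hz : _ = _)
    rw [← hz]
    rfl
  by_cases hs : s (Fin.last l)
  · have hinter : atom w s₀ ∩ y = T s₀ := Subset.antisymm
      (fun z ⟨hz, hzy⟩ => (hsplit z hz).1 hzy) (fun z hz => ⟨hTw s₀ hz, (hsplit z (hTw s₀ hz)).2 hz⟩)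
    simpa only [hs, eq_iff_iff, iff_true, ofPred_mem_eq, hinter] using (hT s₀).1
  · have hdiff : atom w s₀ \ y = atom w s₀ \ T s₀ :=
      ext fun z => and_congr_right fun hz => not_congr (hsplit z hz)
    simpa only [hs, eq_iff_iff, iff_false, ← compl_ofPred, ofPred_mem_eq, ← sdiff_eq, hdiff]
      using (hT s₀).2

end AtomsAgree

namespace FirstOrder.Language.BoundedFormula

variable {L : Language} {γ : Type*}

def quantifierDepth : {l : ℕ} → L.BoundedFormula γ l → ℕ
  | _, falsum => 0
  | _, equal _ _ => 0
  | _, rel _ _ => 0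
  | _, imp φ ψ => max φ.quantifierDepth ψ.quantifierDepth
  | _, all φ => φ.quantifierDepth + 1

end FirstOrder.Language.BoundedFormula

theorem LBA.exists_eq_var {γ : Type*} (t : LBA.Term γ) : ∃ x, t = Term.var x := by
  cases t with
  | var x => exact ⟨x, rfl⟩
  | func f _ => exact f.elim

attribute [local instance] powBA

theorem LBA.realize_iff_of_atomsAgree {l : ℕ} (φ : LBA.BoundedFormula Empty l) {n m : ℕ}
    {e : Empty → Set (Fin n)} {e' : Empty → Set (Fin m)} {v : Fin l → Set (Fin n)}
    {w : Fin l → Set (Fin m)} (h : AtomsAgree (2 ^ φ.quantifierDepth) v w) :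
    φ.Realize e v ↔ φ.Realize e' w := by
  induction φ with
  | falsum => rfl
  | equal t₁ t₂ =>
    obtain ⟨i | i, rfl⟩ := LBA.exists_eq_var t₁
    · exact i.elim
    obtain ⟨j | j, rfl⟩ := LBA.exists_eq_var t₂
    · exact j.elim
    exact h.eq_iff (Nat.pow_pos two_pos) i j
  | rel R ts =>
    cases R
    obtain ⟨i | i, hi⟩ := LBA.exists_eq_var (ts 0)
    · exact i.elim
    obtain ⟨j | j, hj⟩ := LBA.exists_eq_var (ts 1)
    · exact j.elim
    change (ts 0).realize (Sum.elim e v) ⊆ (ts 1).realize (Sum.elim e v) ↔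
      (ts 0).realize (Sum.elim e' w) ⊆ (ts 1).realize (Sum.elim e' w)
    rw [hi, hj]
    exact h.subset_iff (Nat.pow_pos two_pos) i j
  | imp φ ψ ihφ ihψ =>
    simp only [BoundedFormula.quantifierDepth] at h
    rw [BoundedFormula.realize_imp, BoundedFormula.realize_imp,
      ihφ (h.mono (Nat.pow_le_pow_right two_pos (le_max_left _ _))),
      ihψ (h.mono (Nat.pow_le_pow_right two_pos (le_max_right _ _)))]
  | all φ ih =>
    rw [BoundedFormula.quantifierDepth, pow_succ'] at h
    rw [BoundedFormula.realize_all, BoundedFormula.realize_all]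
    refine ⟨fun hv y => ?_, fun hw x => ?_⟩
    · obtain ⟨x, hx⟩ := h.symm.exists_snoc y
      exact (ih hx.symm).1 (hv x)
    · obtain ⟨y, hy⟩ := h.exists_snoc x
      exact (ih hy).2 (hw y)

theorem LBA.realize_iff_of_pow_quantifierDepth_le (φ : LBA.Sentence) {n m : ℕ}
    (hn : 2 ^ φ.quantifierDepth ≤ n) (hm : 2 ^ φ.quantifierDepth ≤ m) :
    Set (Fin n) ⊨ φ ↔ Set (Fin m) ⊨ φ :=
  LBA.realize_iff_of_atomsAgree φ <|
    atomsAgree_fin_zero _ _ (by rwa [Nat.card_fin]) (by rwa [Nat.card_fin])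

theorem Nat.finite_or_finite_compl_of_forall_ge_iff {p : ℕ → Prop} (N : ℕ)
    (h : ∀ n ≥ N, p n ↔ p N) : {n | p n}.Finite ∨ {n | p n}ᶜ.Finite := by
  by_cases hN : p N
  · exact .inr ((finite_Iio N).subset fun n hn => not_le.1 fun hNn => hn ((h n hNn).2 hN))
  · exact .inl ((finite_Iio N).subset fun n hn => not_le.1 fun hNn => hN ((h n hNn).1 hn))

/-- For every sentence `φ` of the language of one binary relation, the set of `n`
such that `𝔅ₙ ⊨ φ` (powerset of an `n`-element set with inclusion) is finite or
cofinite. -/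
theorem finite_or_cofinite_of_sentence (φ : LBA.Sentence) :
    {n : ℕ | @FirstOrder.Language.Sentence.Realize LBA (Set (Fin n)) (powBA n) φ}.Finite ∨
    ({n : ℕ | @FirstOrder.Language.Sentence.Realize LBA (Set (Fin n)) (powBA n) φ}ᶜ).Finite :=
  Nat.finite_or_finite_compl_of_forall_ge_iff _ fun _ hn =>
    LBA.realize_iff_of_pow_quantifierDepth_le φ hn le_rfl
end

section
/- For every base-formula graph on n = p + q nodes over a finite signature, and for every family of infinite sets S_j ⊆ T indexed by the parameter nodes j (p ≤ j < p + q), there exists an injective map σ : Fin n → T such that σ(i) = f_i(σ(a_i(0)), …, σ(a_i(ar(f_i) − 1))) for every non-parameter node i < p, and σ(j) ∈ S_j for every parameter node j. In particular, every base formula is satisfiable in the term algebra. -/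
/-- Ground terms over a signature `F` with arity function `ar`. -/
inductive GTerm (F : Type) (ar : F → ℕ) : Type
  | mk (f : F) (args : Fin (ar f) → GTerm F ar) : GTerm F ar

/-- A base-formula graph on `p + q` nodes: the first `p` nodes (non-parameter nodes)
each carry a function symbol and an argument map, the associated directed graph is
acyclic, and no two distinct non-parameter nodes carry the same symbol with the same
arguments (congruence closure property).  The last `q` nodes are the parameter nodes. -/
structure BaseGraph (F : Type) (ar : F → ℕ) (p q : ℕ) where
  /-- the function symbol labelling each non-parameter node -/
  sym : Fin p → F
  /-- the successors (arguments) of each non-parameter node -/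
  arg : (i : Fin p) → Fin (ar (sym i)) → Fin (p + q)
  /-- the associated directed graph is acyclic: no directed cycle -/
  acyclic : ∀ x : Fin (p + q),
    ¬ Relation.TransGen
        (fun u v : Fin (p + q) =>
          ∃ (i : Fin p) (j : Fin (ar (sym i))), u = Fin.castAdd q i ∧ v = arg i j)
        x x
  /-- no two distinct non-parameter nodes carry the same symbol and the same arguments -/
  nodup : ∀ i i' : Fin p, sym i = sym i' → HEq (arg i) (arg i') → i = i'

namespace BGH
open Relation
open scoped Classical
variable {F : Type} {ar : F → ℕ} {p q : ℕ}

def height : GTerm F ar → ℕ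
  | .mk _ a => (Finset.univ.sup fun j => height (a j)) + 1

lemma height_pos (t : GTerm F ar) : 0 < height t := by
  cases t; rw [height]; omega

lemma height_arg_lt (f : F) (a : Fin (ar f) → GTerm F ar) (j) :
    height (a j) < height (GTerm.mk f a) := by
  rw [height]
  exact Nat.lt_succ_of_le (Finset.le_sup (f := fun j => height (a j)) (Finset.mem_univ j))

/-- `R G v u` : `v` is a child (argument) of the non-parameter node `u`. -/
def R (G : BaseGraph F ar p q) : Fin (p + q) → Fin (p + q) → Prop :=
  fun v u => ∃ (i : Fin p) (j : Fin (ar (G.sym i))), u = Fin.castAdd q i ∧ v = G.arg i j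

lemma no_cycle (G : BaseGraph F ar p q) (x : Fin (p + q)) : ¬ TransGen (R G) x x := by
  intro h
  exact G.acyclic x (Relation.transGen_swap.mpr h)

lemma wfR (G : BaseGraph F ar p q) : WellFounded (R G) := by
  have h1 : IsTrans (Fin (p+q)) (TransGen (R G)) := ⟨fun _ _ _ => TransGen.trans⟩
  have h2 : IsIrrefl (Fin (p+q)) (TransGen (R G)) := ⟨no_cycle G⟩
  have hw : WellFounded (TransGen (R G)) := Finite.wellFounded_of_trans_of_irrefl _
  exact Subrelation.wf (fun h => TransGen.single h) hw

lemma R_step (G : BaseGraph F ar p q) (i : Fin p) (j : Fin (ar (G.sym i))) :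
    R G (G.arg i j) (Fin.castAdd q i) := ⟨i, j, rfl, rfl⟩

/-- The valuation determined by the graph and parameter values `t`. -/
noncomputable def sig (G : BaseGraph F ar p q) (t : Fin q → GTerm F ar) :
    Fin (p + q) → GTerm F ar :=
  (wfR G).fix (fun u rec =>
    if h : u.val < p then
      GTerm.mk (G.sym ⟨u.val, h⟩)
        (fun j => rec (G.arg ⟨u.val, h⟩ j)
          ⟨⟨u.val, h⟩, j, by apply Fin.ext; simp, rfl⟩)
    else t ⟨u.val - p, by omega⟩)

lemma sig_eq (G : BaseGraph F ar p q) (t : Fin q → GTerm F ar) (u : Fin (p + q)) :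
    sig G t u = if h : u.val < p then
      GTerm.mk (G.sym ⟨u.val, h⟩) (fun j => sig G t (G.arg ⟨u.val, h⟩ j))
    else t ⟨u.val - p, by omega⟩ := by
  rw [sig, WellFounded.fix_eq]

lemma sig_castAdd (G : BaseGraph F ar p q) (t : Fin q → GTerm F ar) (i : Fin p) :
    sig G t (Fin.castAdd q i) = GTerm.mk (G.sym i) (fun j => sig G t (G.arg i j)) := by
  rw [sig_eq]
  have h : (Fin.castAdd q i).val < p := by simp [i.isLt]
  rw [dif_pos h]
  have : (⟨(Fin.castAdd q i).val, h⟩ : Fin p) = i := by apply Fin.ext; simp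
  rw [this]

lemma sig_natAdd (G : BaseGraph F ar p q) (t : Fin q → GTerm F ar) (j : Fin q) :
    sig G t (Fin.natAdd p j) = t j := by
  rw [sig_eq]
  have h : ¬ (Fin.natAdd p j).val < p := by simp
  rw [dif_neg h]
  congr 1
  apply Fin.ext; simp

lemma sig_param (G : BaseGraph F ar p q) (t : Fin q → GTerm F ar) (u : Fin (p + q))
    (hu : ¬ u.val < p) : sig G t u = t ⟨u.val - p, by omega⟩ := by
  rw [sig_eq, dif_neg hu]

/-- number of non-parameter nodes (reflexively-transitively) below `u`. -/
noncomputable def cnt (G : BaseGraph F ar p q) (u : Fin (p + q)) : ℕ :=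
  (Finset.univ.filter fun i : Fin p => ReflTransGen (R G) (Fin.castAdd q i) u).card

noncomputable def psup (G : BaseGraph F ar p q) (h : Fin q → ℕ) (u : Fin (p + q)) : ℕ :=
  (Finset.univ.filter fun w : Fin q => ReflTransGen (R G) (Fin.natAdd p w) u).sup h

lemma cnt_le (G : BaseGraph F ar p q) (u : Fin (p + q)) : cnt G u ≤ p := by
  calc cnt G u ≤ (Finset.univ : Finset (Fin p)).card := Finset.card_filter_le _ _
  _ = p := by simp

lemma cnt_lt (G : BaseGraph F ar p q) {v : Fin (p + q)} (i : Fin p)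
    (hv : R G v (Fin.castAdd q i)) : cnt G v < cnt G (Fin.castAdd q i) := by
  have hmem : i ∈ Finset.univ.filter
      fun i' : Fin p => ReflTransGen (R G) (Fin.castAdd q i') (Fin.castAdd q i) := by
    simp [ReflTransGen.refl]
  have hsub : (Finset.univ.filter fun i' : Fin p => ReflTransGen (R G) (Fin.castAdd q i') v)
      ⊆ (Finset.univ.filter
        fun i' : Fin p => ReflTransGen (R G) (Fin.castAdd q i') (Fin.castAdd q i)).erase i := by
    intro i' hi'
    simp only [Finset.mem_filter, Finset.mem_univ, true_and] at hi'
    rw [Finset.mem_erase]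
    refine ⟨?_, by simp only [Finset.mem_filter, Finset.mem_univ, true_and]; exact hi'.tail hv⟩
    rintro rfl
    exact no_cycle G _ (TransGen.tail' hi' hv)
  calc cnt G v ≤ _ := Finset.card_le_card hsub
  _ < _ := Finset.card_erase_lt_of_mem hmem
lemma psup_le (G : BaseGraph F ar p q) (h : Fin q → ℕ) {v u : Fin (p + q)}
    (hv : R G v u) : psup G h v ≤ psup G h u := by
  apply Finset.sup_mono
  intro w hw
  simp only [Finset.mem_filter, Finset.mem_univ, true_and] at hw ⊢
  exact hw.tail hv

/-- subterm heights decrease along the graph. -/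
lemma height_lt_of_trans (G : BaseGraph F ar p q) (t : Fin q → GTerm F ar)
    {v u : Fin (p + q)} (hvu : TransGen (R G) v u) :
    height (sig G t v) < height (sig G t u) := by
  induction hvu with
  | single h =>
    obtain ⟨i, j, rfl, rfl⟩ := h
    rw [sig_castAdd]
    exact height_arg_lt (G.sym i) (fun j' => sig G t (G.arg i j')) j
  | tail _ h ih =>
    obtain ⟨i, j, rfl, rfl⟩ := h
    rw [sig_castAdd]
    exact lt_trans ih (height_arg_lt (G.sym i) (fun j' => sig G t (G.arg i j')) j)

/-- upper bound on heights of values. -/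
lemma height_le (G : BaseGraph F ar p q) (t : Fin q → GTerm F ar) (u : Fin (p + q)) :
    height (sig G t u) ≤ cnt G u + psup G (fun w => height (t w)) u := by
  refine (wfR G).induction
    (C := fun u => height (sig G t u) ≤ cnt G u + psup G (fun w => height (t w)) u) u ?_
  intro u ih
  by_cases hu : u.val < p
  · have hcast : u = Fin.castAdd q ⟨u.val, hu⟩ := by apply Fin.ext; simp
    rw [hcast] at ih ⊢
    generalize (⟨u.val, hu⟩ : Fin p) = i at ih ⊢
    rw [sig_castAdd, height]
    have hcnt : 1 ≤ cnt G (Fin.castAdd q i) := by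
      rw [cnt]
      apply Finset.card_pos.mpr
      exact ⟨i, by simp [ReflTransGen.refl]⟩
    have hb : ∀ j, height (sig G t (G.arg i j)) + 1 ≤
        cnt G (Fin.castAdd q i) + psup G (fun w => height (t w)) (Fin.castAdd q i) := by
      intro j
      have h1 := ih (G.arg i j) (R_step G i j)
      have h2 := cnt_lt G i (R_step G i j)
      have h3 := psup_le G (fun w => height (t w)) (R_step G i j)
      omega
    have : (Finset.univ.sup fun j => height (sig G t (G.arg i j))) + 1 ≤
        cnt G (Fin.castAdd q i) + psup G (fun w => height (t w)) (Fin.castAdd q i) := by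
      rcases Nat.eq_zero_or_pos (ar (G.sym i)) with h0 | h0
      · have : (Finset.univ : Finset (Fin (ar (G.sym i)))) = ∅ := by
          apply Finset.univ_eq_empty_iff.mpr
          rw [h0]; exact Fin.isEmpty'
        rw [this]; simp; omega
      · have hne : (Finset.univ : Finset (Fin (ar (G.sym i)))).Nonempty :=
          ⟨⟨0, h0⟩, Finset.mem_univ _⟩
        obtain ⟨j, _, hj⟩ := Finset.exists_mem_eq_sup _ hne
          (fun j => height (sig G t (G.arg i j)))
        rw [hj]
        exact hb j
    exact this
  · rw [sig_param G t u hu]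
    set w : Fin q := ⟨u.val - p, by omega⟩ with hw
    have : u = Fin.natAdd p w := by apply Fin.ext; simp [hw]; omega
    have hmem : w ∈ Finset.univ.filter
        fun w' : Fin q => ReflTransGen (R G) (Fin.natAdd p w') u := by
      simp only [Finset.mem_filter, Finset.mem_univ, true_and]
      rw [← this]
    have := Finset.le_sup (f := fun w' => height (t w')) hmem
    calc height (t w) ≤ psup G (fun w => height (t w)) u := this
    _ ≤ _ := Nat.le_add_left _ _

def unmk : GTerm F ar → Σ f : F, (Fin (ar f) → GTerm F ar)
  | .mk f a => ⟨f, a⟩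

lemma unmk_inj : Function.Injective (unmk (F := F) (ar := ar)) := by
  intro t1 t2 h
  cases t1 with | mk f a =>
  cases t2 with | mk f' a' =>
  injection h with h1 h2
  subst h1
  rw [eq_of_heq h2]

lemma height_unmk_le {t : GTerm F ar} {n : ℕ} (ht : height t ≤ n + 1)
    (j : Fin (ar (unmk t).1)) : height ((unmk t).2 j) ≤ n := by
  cases t with | mk f a =>
  rw [height] at ht
  have h2 : height (a j) ≤ Finset.univ.sup fun j' => height (a j') :=
    Finset.le_sup (f := fun j' => height (a j')) (Finset.mem_univ (show Fin (ar f) from j))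
  show height (a j) ≤ n
  omega

lemma finite_height_le [Fintype F] (n : ℕ) : {x : GTerm F ar | height x ≤ n}.Finite := by
  induction n with
  | zero =>
    have : {x : GTerm F ar | height x ≤ 0} = ∅ := by
      ext t
      simp only [Set.mem_setOf_eq, Set.mem_empty_iff_false, iff_false]
      have := height_pos t
      omega
    rw [this]; exact Set.finite_empty
  | succ n ih =>
    haveI : Finite {x : GTerm F ar // height x ≤ n} := Set.finite_coe_iff.mpr ih
    rw [← Set.finite_coe_iff]
    let φ : {x : GTerm F ar // height x ≤ n + 1} →
        Σ f : F, (Fin (ar f) → {x : GTerm F ar // height x ≤ n}) :=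
      fun t => ⟨(unmk t.1).1, fun j => ⟨(unmk t.1).2 j, height_unmk_le t.2 j⟩⟩
    let ψ : (Σ f : F, (Fin (ar f) → {x : GTerm F ar // height x ≤ n})) →
        Σ f : F, (Fin (ar f) → GTerm F ar) :=
      fun s => ⟨s.1, fun j => (s.2 j).val⟩
    have hcomp : ∀ t, ψ (φ t) = unmk t.1 := fun _ => rfl
    have hφ : Function.Injective φ := by
      intro x y h
      apply Subtype.ext
      apply unmk_inj
      rw [← hcomp, ← hcomp, h]
    exact Finite.of_injective φ hφ

def iterT (c f : F) (hc : ar c = 0) : ℕ → GTerm F ar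
  | 0 => GTerm.mk c (fun j => (Fin.cast hc j).elim0)
  | n + 1 => GTerm.mk f (fun _ => iterT c f hc n)

lemma infinite_gterm (c f : F) (hc : ar c = 0) (hf : 0 < ar f) :
    Infinite (GTerm F ar) := by
  have hmono : StrictMono (fun n => height (iterT c f hc n)) := by
    apply strictMono_nat_of_lt_succ
    intro n
    have := height_arg_lt f (fun _ : Fin (ar f) => iterT c f hc n) ⟨0, hf⟩
    rw [iterT]
    exact this
  exact Infinite.of_injective (iterT c f hc)
    (fun a b h => hmono.injective (congrArg height h))


lemma psup_spec (G : BaseGraph F ar p q) (h : Fin q → ℕ) (u : Fin (p + q)) :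
    psup G h u = 0 ∨
      ∃ w : Fin q, ReflTransGen (R G) (Fin.natAdd p w) u ∧ psup G h u = h w := by
  rcases Finset.eq_empty_or_nonempty
      (Finset.univ.filter fun w : Fin q => ReflTransGen (R G) (Fin.natAdd p w) u) with he | hne
  · left; rw [psup, he]; simp
  · right
    obtain ⟨w, hw, hsup⟩ := Finset.exists_mem_eq_sup _ hne h
    simp only [Finset.mem_filter, Finset.mem_univ, true_and] at hw
    exact ⟨w, hw, hsup⟩

end BGH

/-- Satisfiability of base formulas: for every base-formula graph over a finite
signature with at least one constant and at least one symbol of positive arity, and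
every family of infinite sets of ground terms indexed by the parameter nodes, there is
an injective valuation `σ` of the nodes by ground terms satisfying all the equations
and placing each parameter node inside its prescribed infinite set. -/

theorem baseGraph_satisfiable {F : Type} [Fintype F] (ar : F → ℕ)
    (hconst : ∃ c : F, ar c = 0) (hfun : ∃ f : F, 0 < ar f)
    {p q : ℕ} (G : BaseGraph F ar p q)
    (S : Fin q → Set (GTerm F ar)) (hS : ∀ j, (S j).Infinite) :
    ∃ σ : Fin (p + q) → GTerm F ar, Function.Injective σ ∧
      (∀ i : Fin p,
        σ (Fin.castAdd q i) = GTerm.mk (G.sym i) (fun j => σ (G.arg i j))) ∧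
      (∀ j : Fin q, σ (Fin.natAdd p j) ∈ S j) := by

  classical
  obtain ⟨c, hc⟩ := hconst
  obtain ⟨f0, hf0⟩ := hfun
  haveI : Infinite (GTerm F ar) := BGH.infinite_gterm c f0 hc hf0
  -- infinite sets contain terms of arbitrarily large height
  have hbig : ∀ (A : Set (GTerm F ar)), A.Infinite → ∀ n, ∃ x ∈ A, n < BGH.height x := by
    intro A hA n
    by_contra hcon
    push_neg at hcon
    exact hA ((BGH.finite_height_le n).subset fun x hx => hcon x hx)
  -- extend S to all of ℕ
  have hS' : ∀ j : ℕ, (if h : j < q then S ⟨j, h⟩ else Set.univ).Infinite := by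
    intro j
    split
    · exact hS _
    · exact Set.infinite_univ
  choose pickf hmem hht using fun (j n : ℕ) => hbig _ (hS' j) n
  -- a sequence of parameter terms with strictly increasing, well-separated heights
  set seq : ℕ → GTerm F ar :=
    fun j => Nat.rec (pickf 0 p) (fun j prev => pickf (j + 1) (BGH.height prev + p)) j
    with hseq_def
  have hseq_mem : ∀ j : ℕ, seq j ∈ if h : j < q then S ⟨j, h⟩ else Set.univ := by
    intro j
    cases j with
    | zero => exact hmem 0 p
    | succ j => exact hmem (j + 1) _
  have hseq0 : p < BGH.height (seq 0) := hht 0 p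
  have hseqS : ∀ j : ℕ, BGH.height (seq j) + p < BGH.height (seq (j + 1)) :=
    fun j => hht (j + 1) _
  have hgap : ∀ a b : ℕ, a < b → BGH.height (seq a) + p < BGH.height (seq b) := by
    intro a b hab
    induction b, hab using Nat.le_induction with
    | base => exact hseqS a
    | succ b _ ih => have := hseqS b; omega
  have hbigp : ∀ a : ℕ, p < BGH.height (seq a) := by
    intro a
    cases a with
    | zero => exact hseq0
    | succ a => have := hgap 0 (a + 1) (Nat.succ_pos a); omega
  set t : Fin q → GTerm F ar := fun w => seq w.val with ht_def
  set σ : Fin (p + q) → GTerm F ar := BGH.sig G t with hσ_def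
  -- non-parameter values never coincide with parameter values
  have noParam : ∀ u : Fin (p + q), u.val < p → ∀ w : Fin q, σ u ≠ t w := by
    intro u hu w heq
    have hK := BGH.height_le G t u
    rw [← hσ_def, heq] at hK
    have hcu := BGH.cnt_le G u
    rcases BGH.psup_spec G (fun w' => BGH.height (t w')) u with h0 | ⟨w0, hreach, hval⟩
    · have hbr : BGH.height (t w) = BGH.height (seq w.val) := rfl
      have := hbigp w.val
      omega
    · -- the reachable parameter with maximal height
      have hne : Fin.natAdd p w0 ≠ u := by
        intro h
        apply absurd hu
        rw [← h]
        simp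
      have htrans : Relation.TransGen (BGH.R G) (Fin.natAdd p w0) u := by
        rcases Relation.reflTransGen_iff_eq_or_transGen.mp hreach with h | h
        · exact absurd h.symm hne
        · exact h
      have hlt : BGH.height (t w0) < BGH.height (t w) := by
        have h5 := BGH.height_lt_of_trans G t htrans
        rw [BGH.sig_natAdd, ← hσ_def, heq] at h5
        exact h5
      have hub : BGH.height (t w) ≤ p + BGH.height (t w0) := by omega
      rcases lt_trichotomy w0.val w.val with hlt' | heq' | hlt'
      · have := hgap w0.val w.val hlt'
        simp only [ht_def] at hlt hub
        omega
      · have : BGH.height (t w0) = BGH.height (t w) := by rw [ht_def]; simp [heq']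
        omega
      · have := hgap w.val w0.val hlt'
        simp only [ht_def] at hlt hub
        omega
  -- injectivity, by strong induction on the height
  have key : ∀ n : ℕ, ∀ u v : Fin (p + q),
      BGH.height (σ u) ≤ n → σ u = σ v → u = v := by
    intro n
    induction n with
    | zero =>
      intro u v h1 _
      exact absurd h1 (by have := BGH.height_pos (σ u); omega)
    | succ n ih =>
      intro u v h1 heq
      by_cases hu : u.val < p <;> by_cases hv : v.val < p
      · -- both non-parameter nodes
        have hui : u = Fin.castAdd q ⟨u.val, hu⟩ := Fin.ext (by simp)
        have hvi : v = Fin.castAdd q ⟨v.val, hv⟩ := Fin.ext (by simp)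
        set i := (⟨u.val, hu⟩ : Fin p) with hi
        set i' := (⟨v.val, hv⟩ : Fin p) with hi'
        have heq' : σ (Fin.castAdd q i) = σ (Fin.castAdd q i') := by
          rw [← hui, ← hvi]; exact heq
        rw [hσ_def, BGH.sig_castAdd, BGH.sig_castAdd, GTerm.mk.injEq] at heq'
        obtain ⟨hsym, hargs⟩ := heq'
        have hk : ar (G.sym i) = ar (G.sym i') := congrArg ar hsym
        have hargs' := (Fin.heq_fun_iff hk).mp hargs
        have harg : ∀ j, G.arg i j = G.arg i' (Fin.cast hk j) := by
          intro j
          apply ih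
          · have h2 : BGH.height (σ (G.arg i j)) < BGH.height (σ (Fin.castAdd q i)) := by
              rw [hσ_def, BGH.sig_castAdd]
              exact BGH.height_arg_lt (G.sym i) (fun j' => BGH.sig G t (G.arg i j')) j
            have h1' : BGH.height (σ (Fin.castAdd q i)) ≤ n + 1 := by
              rw [← hui]; exact h1
            omega
          · exact hargs' j
        have hii : i = i' := G.nodup i i' hsym ((Fin.heq_fun_iff hk).mpr harg)
        rw [hui, hvi, hii]
      · -- u non-parameter, v parameter
        exact absurd (heq.trans (BGH.sig_param G t v hv)) (noParam u hu _)
      · -- u parameter, v non-parameter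
        exact absurd (heq.symm.trans (BGH.sig_param G t u hu)) (noParam v hv _)
      · -- both parameters
        have e1 : σ u = t ⟨u.val - p, by omega⟩ := BGH.sig_param G t u hu
        have e2 : σ v = t ⟨v.val - p, by omega⟩ := BGH.sig_param G t v hv
        rw [e1, e2] at heq
        have hval : u.val - p = v.val - p := by
          by_contra hne
          have hh : BGH.height (t ⟨u.val - p, by omega⟩) = BGH.height (t ⟨v.val - p, by omega⟩) := by
            rw [heq]
          simp only [ht_def] at hh
          rcases Nat.lt_or_ge (u.val - p) (v.val - p) with h | h
          · have := hgap _ _ h; omega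
          · have h' : v.val - p < u.val - p := by omega
            have := hgap _ _ h'; omega
        apply Fin.ext
        omega
  refine ⟨σ, fun u v h => key (BGH.height (σ u)) u v le_rfl h, ?_, ?_⟩
  · intro i
    rw [hσ_def]
    exact BGH.sig_castAdd G t i
  · intro j
    rw [hσ_def, BGH.sig_natAdd]
    have := hseq_mem j.val
    rw [dif_pos j.isLt] at this
    simpa [ht_def] using this
end

section
/- Let U be the least subset of ℕ × ℕ containing (1, 0) and closed under the two binary operations ((p₁,n₁), (p₂,n₂)) ↦ (p₁ + p₂, n₁ + n₂) and ((p₁,n₁), (p₂,n₂)) ↦ (n₁ + p₂, p₁ + n₂). Then U = {(p, n) : p ≥ 1}. (This computes the set of achievable pairs (number of covariant leaves, number of contravariant leaves) of shapes over a covariant binary constructor g and a binary constructor f contravariant in its first argument.) -/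
/-- The least subset of `ℕ × ℕ` containing `(1, 0)` and closed under the operations
`((p₁,n₁), (p₂,n₂)) ↦ (p₁ + p₂, n₁ + n₂)` (a covariant binary constructor) and
`((p₁,n₁), (p₂,n₂)) ↦ (n₁ + p₂, p₁ + n₂)` (a binary constructor contravariant in its
first argument). -/
inductive GenPN : ℕ × ℕ → Prop
  | base : GenPN (1, 0)
  | covar {p₁ n₁ p₂ n₂ : ℕ} : GenPN (p₁, n₁) → GenPN (p₂, n₂) →
      GenPN (p₁ + p₂, n₁ + n₂)
  | contra {p₁ n₁ p₂ n₂ : ℕ} : GenPN (p₁, n₁) → GenPN (p₂, n₂) →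
      GenPN (n₁ + p₂, p₁ + n₂)

lemma genPN_all (p n : ℕ) : GenPN (p + 1, n) := by
  induction n with
  | zero =>
    induction p with
    | zero => exact GenPN.base
    | succ p ih => exact GenPN.covar ih GenPN.base
  | succ n ih => simpa [Nat.add_comm] using GenPN.contra GenPN.base ih

/-- The set of achievable pairs (number of covariant leaves, number of contravariant
leaves) is exactly `{(p, n) | p ≥ 1}`. -/
theorem genPN_eq : {x : ℕ × ℕ | GenPN x} = {x : ℕ × ℕ | 1 ≤ x.1} := by
  ext x
  simp only [Set.mem_setOf_eq]
  constructor
  · intro h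
    induction h with
    | base => simp
    | covar h1 h2 ih1 ih2 => simp; omega
    | contra h1 h2 ih1 ih2 => simp; omega
  · intro h
    obtain ⟨p, n⟩ := x
    simp only at h
    obtain ⟨p, rfl⟩ := Nat.exists_eq_add_of_le h
    rw [Nat.add_comm]
    exact genPN_all p n
end
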